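/- Boolean duality: on implication-free formulas (built only from atoms, ⊥, ⊤, ∧, ∨, ●, •̂, S, T, ○, ○̂, U, R, where •̂ and ○̂ are treated as primitive connectives) define δ recursively by fixing atoms and swapping each connective with its dual: ∧/∨, ⊤/⊥, ●/•̂, ○/○̂, S/T, U/R. Then for implication-free φ,ψ: φ≡ψ if and only if δ(φ)≡δ(ψ). -/
import Mathlib


inductive Formula (A : Type) : Type
  | atom (a : A)
  | falsum
  | verum
  | conj (φ ψ : Formula A)
  | disj (φ ψ : Formula A)
  | impl (φ ψ : Formula A)
  | prev (φ : Formula A)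
  | wprev (φ : Formula A)
  | since (φ ψ : Formula A)
  | trigger (φ ψ : Formula A)
  | next (φ : Formula A)
  | wnext (φ : Formula A)
  | untl (φ ψ : Formula A)
  | release (φ ψ : Formula A)
  | whil (φ ψ : Formula A)

/-- THT satisfaction: `satAux l T H k φ` is `⟨H,T⟩,k ⊨ φ` on traces of length `l`
(with weak previous `•̂` and weak next `○̂` as primitive connectives). -/
def satAux {A : Type} (l : ℕ∞) (T : ℕ → Set A) : (ℕ → Set A) → ℕ → Formula A → Prop
  | H, k, .atom a => a ∈ H k
  | _, _, .falsum => False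
  | _, _, .verum => True
  | H, k, .conj φ ψ => satAux l T H k φ ∧ satAux l T H k ψ
  | H, k, .disj φ ψ => satAux l T H k φ ∨ satAux l T H k ψ
  | H, k, .impl φ ψ =>
      (satAux l T H k φ → satAux l T H k ψ) ∧ (satAux l T T k φ → satAux l T T k ψ)
  | H, k, .prev φ => 0 < k ∧ satAux l T H (k - 1) φ
  | H, k, .wprev φ => k = 0 ∨ satAux l T H (k - 1) φ
  | H, k, .since φ ψ =>
      ∃ j, j ≤ k ∧ satAux l T H j ψ ∧ ∀ i, j < i → i ≤ k → satAux l T H i φ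
  | H, k, .trigger φ ψ =>
      ∀ j, j ≤ k → satAux l T H j ψ ∨ ∃ i, j < i ∧ i ≤ k ∧ satAux l T H i φ
  | H, k, .next φ => ((k + 1 : ℕ) : ℕ∞) < l ∧ satAux l T H (k + 1) φ
  | H, k, .wnext φ => ((k + 1 : ℕ) : ℕ∞) = l ∨ satAux l T H (k + 1) φ
  | H, k, .untl φ ψ =>
      ∃ j, k ≤ j ∧ (j : ℕ∞) < l ∧ satAux l T H j ψ ∧ ∀ i, k ≤ i → i < j → satAux l T H i φ
  | H, k, .release φ ψ =>
      ∀ j, k ≤ j → (j : ℕ∞) < l → satAux l T H j ψ ∨ ∃ i, k ≤ i ∧ i < j ∧ satAux l T H i φ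
  | H, k, .whil φ ψ =>
      (∀ j, k ≤ j → (j : ℕ∞) < l →
          satAux l T H j φ ∨ ∃ i, k ≤ i ∧ i < j ∧ ¬ satAux l T H i ψ)
        ∧
      (∀ j, k ≤ j → (j : ℕ∞) < l →
          satAux l T T j φ ∨ ∃ i, k ≤ i ∧ i < j ∧ ¬ satAux l T T i ψ)

/-- `Sat l H T k φ` : the HT-trace `⟨H,T⟩` of length `l` satisfies `φ` at time `k`. -/
def Sat {A : Type} (l : ℕ∞) (H T : ℕ → Set A) (k : ℕ) (φ : Formula A) : Prop :=
  satAux l T H k φ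

/-- `⟨H,T⟩` is an HT-trace of length `l`. -/
def IsHT {A : Type} (l : ℕ∞) (H T : ℕ → Set A) : Prop :=
  ∀ i : ℕ, (i : ℕ∞) < l → H i ⊆ T i

/-- THT-equivalence of two formulas. -/
def ThtEquiv {A : Type} (φ ψ : Formula A) : Prop :=
  ∀ (l : ℕ∞) (H T : ℕ → Set A), IsHT l H T →
    ∀ k : ℕ, (k : ℕ∞) < l → (Sat l H T k φ ↔ Sat l H T k ψ)

/-- Implication-free formulas (no → and no W), with `•̂` and `○̂` primitive. -/
def ImpFree {A : Type} : Formula A → Prop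
  | .atom _ => True
  | .falsum => True
  | .verum => True
  | .conj φ ψ => ImpFree φ ∧ ImpFree ψ
  | .disj φ ψ => ImpFree φ ∧ ImpFree ψ
  | .impl _ _ => False
  | .prev φ => ImpFree φ
  | .wprev φ => ImpFree φ
  | .since φ ψ => ImpFree φ ∧ ImpFree ψ
  | .trigger φ ψ => ImpFree φ ∧ ImpFree ψ
  | .next φ => ImpFree φ
  | .wnext φ => ImpFree φ
  | .untl φ ψ => ImpFree φ ∧ ImpFree ψ
  | .release φ ψ => ImpFree φ ∧ ImpFree ψ
  | .whil _ _ => False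

/-- The Boolean dual map `δ`, swapping ∧/∨, ⊤/⊥, ●/•̂, ○/○̂, S/T, U/R
(it fixes atoms; → and W do not occur in implication-free formulas). -/
def dual {A : Type} : Formula A → Formula A
  | .atom a => .atom a
  | .falsum => .verum
  | .verum => .falsum
  | .conj φ ψ => .disj (dual φ) (dual ψ)
  | .disj φ ψ => .conj (dual φ) (dual ψ)
  | .impl φ ψ => .impl (dual φ) (dual ψ)
  | .prev φ => .wprev (dual φ)
  | .wprev φ => .prev (dual φ)
  | .since φ ψ => .trigger (dual φ) (dual ψ)
  | .trigger φ ψ => .since (dual φ) (dual ψ)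
  | .next φ => .wnext (dual φ)
  | .wnext φ => .next (dual φ)
  | .untl φ ψ => .release (dual φ) (dual ψ)
  | .release φ ψ => .untl (dual φ) (dual ψ)
  | .whil φ ψ => .whil (dual φ) (dual ψ)


lemma dual_impFree {A : Type} : ∀ φ : Formula A, ImpFree φ → ImpFree (dual φ)
  | .atom _, _ => trivial
  | .falsum, _ => trivial
  | .verum, _ => trivial
  | .conj φ ψ, h => ⟨dual_impFree φ h.1, dual_impFree ψ h.2⟩
  | .disj φ ψ, h => ⟨dual_impFree φ h.1, dual_impFree ψ h.2⟩
  | .prev φ, h => dual_impFree φ h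
  | .wprev φ, h => dual_impFree φ h
  | .since φ ψ, h => ⟨dual_impFree φ h.1, dual_impFree ψ h.2⟩
  | .trigger φ ψ, h => ⟨dual_impFree φ h.1, dual_impFree ψ h.2⟩
  | .next φ, h => dual_impFree φ h
  | .wnext φ, h => dual_impFree φ h
  | .untl φ ψ, h => ⟨dual_impFree φ h.1, dual_impFree ψ h.2⟩
  | .release φ ψ, h => ⟨dual_impFree φ h.1, dual_impFree ψ h.2⟩

lemma dual_dual {A : Type} : ∀ φ : Formula A, ImpFree φ → dual (dual φ) = φ
  | .atom _, _ => rfl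
  | .falsum, _ => rfl
  | .verum, _ => rfl
  | .conj φ ψ, h => by simp [dual, dual_dual φ h.1, dual_dual ψ h.2]
  | .disj φ ψ, h => by simp [dual, dual_dual φ h.1, dual_dual ψ h.2]
  | .prev φ, h => by simp [dual, dual_dual φ h]
  | .wprev φ, h => by simp [dual, dual_dual φ h]
  | .since φ ψ, h => by simp [dual, dual_dual φ h.1, dual_dual ψ h.2]
  | .trigger φ ψ, h => by simp [dual, dual_dual φ h.1, dual_dual ψ h.2]
  | .next φ, h => by simp [dual, dual_dual φ h]
  | .wnext φ, h => by simp [dual, dual_dual φ h]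
  | .untl φ ψ, h => by simp [dual, dual_dual φ h.1, dual_dual ψ h.2]
  | .release φ ψ, h => by simp [dual, dual_dual φ h.1, dual_dual ψ h.2]

/-- For implication-free formulas, satisfaction does not depend on `T`. -/
lemma indepT {A : Type} (l : ℕ∞) (T T' H : ℕ → Set A) :
    ∀ φ : Formula A, ImpFree φ → ∀ k, (satAux l T H k φ ↔ satAux l T' H k φ)
  | .atom _, _, _ => Iff.rfl
  | .falsum, _, _ => Iff.rfl
  | .verum, _, _ => Iff.rfl
  | .conj φ ψ, h, k => by
      simp only [satAux]; rw [indepT l T T' H φ h.1 k, indepT l T T' H ψ h.2 k]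
  | .disj φ ψ, h, k => by
      simp only [satAux]; rw [indepT l T T' H φ h.1 k, indepT l T T' H ψ h.2 k]
  | .prev φ, h, k => by simp only [satAux]; rw [indepT l T T' H φ h (k-1)]
  | .wprev φ, h, k => by simp only [satAux]; rw [indepT l T T' H φ h (k-1)]
  | .since φ ψ, h, k => by
      simp only [satAux]
      exact exists_congr fun j => and_congr_right fun _ =>
        and_congr (indepT l T T' H ψ h.2 j)
          (forall_congr' fun i => imp_congr_right fun _ => imp_congr_right fun _ =>
            indepT l T T' H φ h.1 i)
  | .trigger φ ψ, h, k => by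
      simp only [satAux]
      exact forall_congr' fun j => imp_congr_right fun _ =>
        or_congr (indepT l T T' H ψ h.2 j)
          (exists_congr fun i => and_congr_right fun _ => and_congr_right fun _ =>
            indepT l T T' H φ h.1 i)
  | .next φ, h, k => by simp only [satAux]; rw [indepT l T T' H φ h (k+1)]
  | .wnext φ, h, k => by simp only [satAux]; rw [indepT l T T' H φ h (k+1)]
  | .untl φ ψ, h, k => by
      simp only [satAux]
      exact exists_congr fun j => and_congr_right fun _ => and_congr_right fun _ =>
        and_congr (indepT l T T' H ψ h.2 j)
          (forall_congr' fun i => imp_congr_right fun _ => imp_congr_right fun _ =>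
            indepT l T T' H φ h.1 i)
  | .release φ ψ, h, k => by
      simp only [satAux]
      exact forall_congr' fun j => imp_congr_right fun _ => imp_congr_right fun _ =>
        or_congr (indepT l T T' H ψ h.2 j)
          (exists_congr fun i => and_congr_right fun _ => and_congr_right fun _ =>
            indepT l T T' H φ h.1 i)

open Classical in
/-- Key lemma: `dual φ` holds on `H` at `k < l` iff `φ` fails on the complement of `H`. -/
lemma dual_neg {A : Type} (l : ℕ∞) (T T' H : ℕ → Set A) :
    ∀ φ : Formula A, ImpFree φ → ∀ k : ℕ, (k : ℕ∞) < l →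
      (satAux l T H k (dual φ) ↔ ¬ satAux l T' (fun i => (H i)ᶜ) k φ)
  | .atom a, _, k, _ => by simp [dual, satAux]
  | .falsum, _, k, _ => by simp [dual, satAux]
  | .verum, _, k, _ => by simp [dual, satAux]
  | .conj φ ψ, h, k, hk => by
      simp only [dual, satAux, not_and_or]
      rw [dual_neg l T T' H φ h.1 k hk, dual_neg l T T' H ψ h.2 k hk]
  | .disj φ ψ, h, k, hk => by
      simp only [dual, satAux, not_or]
      rw [dual_neg l T T' H φ h.1 k hk, dual_neg l T T' H ψ h.2 k hk]
  | .prev φ, h, k, hk => by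
      have hk' : ((k - 1 : ℕ) : ℕ∞) < l :=
        lt_of_le_of_lt (Nat.cast_le.mpr (Nat.sub_le k 1)) hk
      simp only [dual, satAux]
      rw [dual_neg l T T' H φ h (k-1) hk']
      constructor
      · rintro (h0 | hn) ⟨hpos, hs⟩
        · omega
        · exact hn hs
      · intro hn
        rcases Nat.eq_zero_or_pos k with h0 | h0
        · exact Or.inl h0
        · exact Or.inr fun hs => hn ⟨h0, hs⟩
  | .wprev φ, h, k, hk => by
      have hk' : ((k - 1 : ℕ) : ℕ∞) < l :=
        lt_of_le_of_lt (Nat.cast_le.mpr (Nat.sub_le k 1)) hk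
      simp only [dual, satAux]
      rw [dual_neg l T T' H φ h (k-1) hk']
      constructor
      · rintro ⟨hpos, hn⟩ (h0 | hs)
        · omega
        · exact hn hs
      · intro hn
        refine ⟨?_, fun hs => hn (Or.inr hs)⟩
        by_contra h0
        exact hn (Or.inl (by omega))
  | .since φ ψ, h, k, hk => by
      have hlt : ∀ j : ℕ, j ≤ k → ((j : ℕ∞) < l) := fun j hj =>
        lt_of_le_of_lt (Nat.cast_le.mpr hj) hk
      simp only [dual, satAux, not_exists]
      constructor
      · rintro hd j ⟨hjk, hy, hrest⟩
        rcases hd j hjk with hy' | ⟨i, hji, hik, hx⟩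
        · exact (dual_neg l T T' H ψ h.2 j (hlt j hjk)).mp hy' hy
        · exact (dual_neg l T T' H φ h.1 i (hlt i hik)).mp hx (hrest i hji hik)
      · intro hd j hjk
        by_cases hy : satAux l T' (fun i => (H i)ᶜ) j ψ
        · right
          by_contra hc
          push_neg at hc
          refine hd j ⟨hjk, hy, fun i hji hik => ?_⟩
          by_contra hx
          exact hc i hji hik ((dual_neg l T T' H φ h.1 i (hlt i hik)).mpr hx)
        · exact Or.inl ((dual_neg l T T' H ψ h.2 j (hlt j hjk)).mpr hy)
  | .trigger φ ψ, h, k, hk => by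
      have hlt : ∀ j : ℕ, j ≤ k → ((j : ℕ∞) < l) := fun j hj =>
        lt_of_le_of_lt (Nat.cast_le.mpr hj) hk
      simp only [dual, satAux]
      constructor
      · rintro ⟨j, hjk, hy, hφ⟩ hc
        rcases hc j hjk with hy' | ⟨i, hji, hik, hx⟩
        · exact (dual_neg l T T' H ψ h.2 j (hlt j hjk)).mp hy hy'
        · exact (dual_neg l T T' H φ h.1 i (hlt i hik)).mp (hφ i hji hik) hx
      · intro hn
        push_neg at hn
        obtain ⟨j, hjk, hy, hφ⟩ := hn
        refine ⟨j, hjk, (dual_neg l T T' H ψ h.2 j (hlt j hjk)).mpr hy, ?_⟩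
        intro i hji hik
        exact (dual_neg l T T' H φ h.1 i (hlt i hik)).mpr (hφ i hji hik)
  | .next φ, h, k, hk => by
      have hle : ((k + 1 : ℕ) : ℕ∞) ≤ l := by
        rw [Nat.cast_add, Nat.cast_one]
        exact Order.add_one_le_of_lt hk
      simp only [dual, satAux]
      rcases lt_or_eq_of_le hle with hlt | heq
      · rw [dual_neg l T T' H φ h (k+1) hlt]
        constructor
        · rintro (h0 | hn) ⟨_, hs⟩
          · exact absurd h0 (ne_of_lt hlt)
          · exact hn hs
        · intro hn
          exact Or.inr fun hs => hn ⟨hlt, hs⟩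
      · constructor
        · rintro _ ⟨hlt', _⟩
          exact absurd heq (ne_of_lt hlt')
        · intro _
          exact Or.inl heq
  | .wnext φ, h, k, hk => by
      have hle : ((k + 1 : ℕ) : ℕ∞) ≤ l := by
        rw [Nat.cast_add, Nat.cast_one]
        exact Order.add_one_le_of_lt hk
      simp only [dual, satAux]
      rcases lt_or_eq_of_le hle with hlt | heq
      · rw [dual_neg l T T' H φ h (k+1) hlt]
        constructor
        · rintro ⟨_, hn⟩ (h0 | hs)
          · exact absurd h0 (ne_of_lt hlt)
          · exact hn hs
        · intro hn
          exact ⟨hlt, fun hs => hn (Or.inr hs)⟩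
      · constructor
        · rintro ⟨hlt', _⟩ _
          exact absurd heq (ne_of_lt hlt')
        · intro hn
          exact absurd (Or.inl heq) hn
  | .untl φ ψ, h, k, hk => by
      simp only [dual, satAux, not_exists]
      constructor
      · rintro hd j ⟨hkj, hjl, hy, hrest⟩
        rcases hd j hkj hjl with hy' | ⟨i, hki, hij, hx⟩
        · exact (dual_neg l T T' H ψ h.2 j hjl).mp hy' hy
        · exact (dual_neg l T T' H φ h.1 i
            (lt_of_le_of_lt (Nat.cast_le.mpr hij.le) hjl)).mp hx (hrest i hki hij)
      · intro hd j hkj hjl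
        by_cases hy : satAux l T' (fun i => (H i)ᶜ) j ψ
        · right
          by_contra hc
          push_neg at hc
          refine hd j ⟨hkj, hjl, hy, fun i hki hij => ?_⟩
          by_contra hx
          exact hc i hki hij ((dual_neg l T T' H φ h.1 i
            (lt_of_le_of_lt (Nat.cast_le.mpr hij.le) hjl)).mpr hx)
        · exact Or.inl ((dual_neg l T T' H ψ h.2 j hjl).mpr hy)
  | .release φ ψ, h, k, hk => by
      simp only [dual, satAux]
      constructor
      · rintro ⟨j, hkj, hjl, hy, hφ⟩ hc
        rcases hc j hkj hjl with hy' | ⟨i, hki, hij, hx⟩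
        · exact (dual_neg l T T' H ψ h.2 j hjl).mp hy hy'
        · exact (dual_neg l T T' H φ h.1 i
            (lt_of_le_of_lt (Nat.cast_le.mpr hij.le) hjl)).mp (hφ i hki hij) hx
      · intro hn
        push_neg at hn
        obtain ⟨j, hkj, hjl, hy, hφ⟩ := hn
        refine ⟨j, hkj, hjl, (dual_neg l T T' H ψ h.2 j hjl).mpr hy, ?_⟩
        intro i hki hij
        exact (dual_neg l T T' H φ h.1 i
          (lt_of_le_of_lt (Nat.cast_le.mpr hij.le) hjl)).mpr (hφ i hki hij)

lemma duality_forward {A : Type} (φ ψ : Formula A)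
    (hφ : ImpFree φ) (hψ : ImpFree ψ) (h : ThtEquiv φ ψ) :
    ThtEquiv (dual φ) (dual ψ) := by
  intro l H T hHT k hk
  have hT : IsHT l (fun i => (H i)ᶜ) (fun i => (H i)ᶜ) := fun i _ => le_refl _
  have key := h l (fun i => (H i)ᶜ) (fun i => (H i)ᶜ) hT k hk
  unfold Sat at key ⊢
  rw [dual_neg l T (fun i => (H i)ᶜ) H φ hφ k hk,
      dual_neg l T (fun i => (H i)ᶜ) H ψ hψ k hk]
  exact not_congr key

theorem boolean_duality' {A : Type} (φ ψ : Formula A)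
    (hφ : ImpFree φ) (hψ : ImpFree ψ) :
    ThtEquiv φ ψ ↔ ThtEquiv (dual φ) (dual ψ) := by
  constructor
  · exact duality_forward φ ψ hφ hψ
  · intro h
    have := duality_forward (dual φ) (dual ψ) (dual_impFree φ hφ) (dual_impFree ψ hψ) h
    rwa [dual_dual φ hφ, dual_dual ψ hψ] at this

/-- Boolean duality: for implication-free `φ`, `ψ`: `φ ≡ ψ` iff `δ(φ) ≡ δ(ψ)`. -/
theorem boolean_duality {A : Type} (φ ψ : Formula A)
    (hφ : ImpFree φ) (hψ : ImpFree ψ) :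
    ThtEquiv φ ψ ↔ ThtEquiv (dual φ) (dual ψ) :=
  boolean_duality' φ ψ hφ hψ
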